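/- arXiv:0912.0064 — 4 statements merged into one kernel-verified Lean document; each statement's English description precedes it below -/
import Mathlib

section
/- Let z₀ ∈ ℂ with z₀ ≠ 0, let U be an open neighborhood of z₀, and let g : U → ℂ be holomorphic with g(z) = (z − z₀)² h(z), where h is holomorphic on U, h(z₀) ≠ 0, and g has no zeros in U ∖ {z₀}. Assume the coefficient condition h(z₀) + z₀ h′(z₀) = 0. Then the function Φ(z) = −½ (z g′(z)/g(z))² − z · d/dz ( z g′(z)/g(z) ), which is holomorphic on U ∖ {z₀}, has a removable singularity at z₀: there is a holomorphic function on a neighborhood of z₀ agreeing with Φ away from z₀. -/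
/-- **Removable singularity of the holomorphic part `Φ` of the Lorentzian
Shiffman function.** Let `z₀ ≠ 0`, `h` holomorphic near `z₀` with `h z₀ ≠ 0`,
`g z = (z - z₀)² h z` nonvanishing away from `z₀`, and assume the period
condition `h z₀ + z₀ h' z₀ = 0`. Then
`Φ z = -½ (z g'/g)² - z (z g'/g)'`, holomorphic on `U \ {z₀}`, has a
removable singularity at `z₀`. -/
theorem shiffman_holomorphic_part_removable_singularity
    (z₀ : ℂ) (hz₀ : z₀ ≠ 0)
    (U : Set ℂ) (hU : IsOpen U) (hz₀U : z₀ ∈ U)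
    (h : ℂ → ℂ) (hh : DifferentiableOn ℂ h U) (hh0 : h z₀ ≠ 0)
    (g : ℂ → ℂ) (hg : ∀ z, g z = (z - z₀) ^ 2 * h z)
    (hgne : ∀ z ∈ U, z ≠ z₀ → g z ≠ 0)
    (hcoef : h z₀ + z₀ * deriv h z₀ = 0)
    (Φ : ℂ → ℂ)
    (hΦ : ∀ z, Φ z = -(1 / 2) * (z * deriv g z / g z) ^ 2
      - z * deriv (fun w => w * deriv g w / g w) z) :
    DifferentiableOn ℂ Φ (U \ {z₀}) ∧
    ∃ V : Set ℂ, IsOpen V ∧ z₀ ∈ V ∧ V ⊆ U ∧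
      ∃ F : ℂ → ℂ, DifferentiableOn ℂ F V ∧ ∀ z ∈ V, z ≠ z₀ → F z = Φ z := by
  -- g as a function
  have gfun : g = fun z => (z - z₀) ^ 2 * h z := funext hg
  -- g differentiable on U
  have hgd : DifferentiableOn ℂ g U := by
    rw [gfun]
    exact (((differentiableOn_id.sub_const z₀).pow 2).mul hh)
  have hgan : AnalyticOnNhd ℂ g U := hgd.analyticOnNhd hU
  have hgderivan : AnalyticOnNhd ℂ (deriv g) U := hgan.deriv
  have hhan : AnalyticOnNhd ℂ h U := hh.analyticOnNhd hU
  have hhderivan : AnalyticOnNhd ℂ (deriv h) U := hhan.deriv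
  -- the set where also h ≠ 0
  set V : Set ℂ := U ∩ h ⁻¹' {0}ᶜ with hV
  have hVopen : IsOpen V := hh.continuousOn.isOpen_inter_preimage hU isOpen_compl_singleton
  have hz₀V : z₀ ∈ V := ⟨hz₀U, by simpa using hh0⟩
  have hVsub : V ⊆ U := Set.inter_subset_left
  have hVh : ∀ z ∈ V, h z ≠ 0 := fun z hz => by simpa using hz.2
  -- deriv g formula on U
  have hderivg : ∀ z ∈ U, deriv g z =
      2 * (z - z₀) * h z + (z - z₀) ^ 2 * deriv h z := by
    intro z hz
    have h1 : HasDerivAt (fun w : ℂ => (w - z₀) ^ 2) (2 * (z - z₀)) z := by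
      have := ((hasDerivAt_id z).sub_const z₀).fun_pow 2
      simpa [mul_comm] using this
    have h2 : HasDerivAt h (deriv h z) z :=
      ((hh.differentiableAt (hU.mem_nhds hz)).hasDerivAt)
    have := h1.fun_mul h2
    rw [gfun]
    simpa [mul_comm, mul_assoc] using this.deriv
  -- r = z h'/h
  set r : ℂ → ℂ := fun z => z * deriv h z / h z with hr
  have hrd : DifferentiableOn ℂ r V := by
    apply DifferentiableOn.div
    · exact (differentiableOn_id.mul
        ((hhderivan.differentiableOn).mono hVsub))
    · exact hh.mono hVsub
    · exact hVh
  have hran : AnalyticOnNhd ℂ r V := hrd.analyticOnNhd hVopen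
  have hrz₀ : r z₀ = -1 := by
    have : z₀ * deriv h z₀ = -h z₀ := by linear_combination hcoef
    rw [hr]; simp only []
    rw [this, neg_div, div_self hh0]
  -- z g'/g on V \ {z₀}
  have key : ∀ z ∈ V, z ≠ z₀ →
      z * deriv g z / g z = 2 + 2 * z₀ * (z - z₀)⁻¹ + r z := by
    intro z hz hne
    have hw : z - z₀ ≠ 0 := sub_ne_zero.2 hne
    have hhz : h z ≠ 0 := hVh z hz
    rw [hderivg z (hVsub hz), hg z, hr]
    field_simp
    ring
  -- Part 1 : differentiability of Φ on U \ {z₀}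
  have hW : IsOpen (U \ {z₀}) := hU.sdiff isClosed_singleton
  have hGd : DifferentiableOn ℂ (fun w => w * deriv g w / g w) (U \ {z₀}) := by
    apply DifferentiableOn.div
    · exact differentiableOn_id.mul
        ((hgderivan.differentiableOn).mono Set.diff_subset)
    · exact hgd.mono Set.diff_subset
    · exact fun z hz => hgne z hz.1 (by simpa using hz.2)
  have hGderivd : DifferentiableOn ℂ (deriv fun w => w * deriv g w / g w)
      (U \ {z₀}) := ((hGd.analyticOnNhd hW).deriv).differentiableOn
  have part1 : DifferentiableOn ℂ Φ (U \ {z₀}) := by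
    have : Φ = fun z => -(1 / 2) * (z * deriv g z / g z) ^ 2
        - z * deriv (fun w => w * deriv g w / g w) z := funext hΦ
    rw [this]
    apply DifferentiableOn.sub
    · exact (differentiableOn_const _).mul (hGd.pow 2)
    · exact differentiableOn_id.mul hGderivd
  refine ⟨part1, V, hVopen, hz₀V, hVsub, ?_⟩
  -- the extension F
  refine ⟨fun z => -(1/2) * (2 + r z)^2 - z * deriv r z - 2 * z₀ * dslope r z₀ z,
    ?_, ?_⟩
  · -- differentiability of F on V
    have hds : DifferentiableOn ℂ (dslope r z₀) V := by
      intro z hz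
      rcases eq_or_ne z z₀ with rfl | hne
      · rcases hran z hz with ⟨p, hp⟩
        exact ((hp.has_fpower_series_dslope_fslope).analyticAt).differentiableAt.differentiableWithinAt
      · exact (differentiableWithinAt_dslope_of_ne hne).2 (hrd z hz)
    apply DifferentiableOn.sub
    apply DifferentiableOn.sub
    · exact (differentiableOn_const _).mul
        (((differentiableOn_const _).add hrd).pow 2)
    · exact differentiableOn_id.mul ((hran.deriv).differentiableOn)
    · exact (differentiableOn_const _).mul hds
  · -- F = Φ on V \ {z₀}
    intro z hz hne
    have hw : z - z₀ ≠ 0 := sub_ne_zero.2 hne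
    have hdslope : dslope r z₀ z = (r z + 1) / (z - z₀) := by
      rw [dslope_of_ne _ hne, slope_def_field, hrz₀]
      rw [div_eq_div_iff hw hw]; ring
    -- compute deriv of z g'/g at z
    have heq : (fun w => w * deriv g w / g w) =ᶠ[nhds z]
        (fun w => 2 + 2 * z₀ * (w - z₀)⁻¹ + r w) := by
      have hmem : V \ {z₀} ∈ nhds z :=
        (hVopen.sdiff isClosed_singleton).mem_nhds ⟨hz, by simpa using hne⟩
      filter_upwards [hmem] with w hw'
      exact key w hw'.1 (by simpa using hw'.2)
    have hderivG : deriv (fun w => w * deriv g w / g w) z =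
        2 * z₀ * (-1 / (z - z₀) ^ 2) + deriv r z := by
      rw [heq.deriv_eq]
      have h1 : HasDerivAt (fun w : ℂ => 2 * z₀ * (w - z₀)⁻¹)
          (2 * z₀ * (-1 / (z - z₀) ^ 2)) z := by
        have := (((hasDerivAt_id z).sub_const z₀).inv hw).const_mul (2 * z₀)
        simpa using this
      have h2 : HasDerivAt r (deriv r z) z :=
        (hrd.differentiableAt (hVopen.mem_nhds hz)).hasDerivAt
      have := ((hasDerivAt_const z (2:ℂ)).fun_add h1).fun_add h2
      simpa using this.deriv
    show -(1/2) * (2 + r z)^2 - z * deriv r z - 2 * z₀ * dslope r z₀ z = _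
    rw [hΦ z, key z hz hne, hderivG, hdslope]
    field_simp
    ring
end

section
/- Let z₀ ∈ ℂ with z₀ ≠ 0, let U be an open neighborhood of z₀, and let g : U → ℂ be holomorphic with g(z) = (z − z₀)² h(z), where h is holomorphic on U, h(z₀) ≠ 0, and g has no zeros in U ∖ {z₀}. Then the function Ψ(z) = (1 − 1/(1 − |g(z)|²)) · (z g′(z)/g(z))², defined on a punctured neighborhood of z₀ (where g ≠ 0 and |g| < 1), extends to a C^∞ function (in the sense of real differentiability on ℂ ≅ ℝ²) on a neighborhood of z₀. -/
set_option maxHeartbeats 1000000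


/-- **Smooth extension of the non-holomorphic part `Ψ` of the Lorentzian
Shiffman function.** Let `z₀ ≠ 0`, `h` holomorphic near `z₀` with `h z₀ ≠ 0`,
and `g z = (z - z₀)² h z` nonvanishing away from `z₀`. Then
`Ψ z = (1 - 1/(1 - |g z|²)) (z g'/g)²`, defined on a punctured neighborhood
of `z₀`, extends to a real-`C^∞` function on a neighborhood of `z₀`. -/
theorem shiffman_nonholomorphic_part_smooth_extension
    (z₀ : ℂ) (hz₀ : z₀ ≠ 0)
    (U : Set ℂ) (hU : IsOpen U) (hz₀U : z₀ ∈ U)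
    (h : ℂ → ℂ) (hh : DifferentiableOn ℂ h U) (hh0 : h z₀ ≠ 0)
    (g : ℂ → ℂ) (hg : ∀ z, g z = (z - z₀) ^ 2 * h z)
    (hgne : ∀ z ∈ U, z ≠ z₀ → g z ≠ 0)
    (Ψ : ℂ → ℂ)
    (hΨ : ∀ z, Ψ z =
      (((1 - 1 / (1 - ‖g z‖ ^ 2) : ℝ)) : ℂ)
        * (z * deriv g z / g z) ^ 2) :
    ∃ V : Set ℂ, IsOpen V ∧ z₀ ∈ V ∧ V ⊆ U ∧
      ∃ F : ℂ → ℂ, ContDiffOn ℝ (⊤ : ℕ∞) F V ∧ ∀ z ∈ V, z ≠ z₀ → F z = Ψ z := by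
  classical
  -- continuity facts
  have hhc : ContinuousOn h U := hh.continuousOn
  have hgdiff : DifferentiableOn ℂ g U := by
    have : DifferentiableOn ℂ (fun z => (z - z₀) ^ 2 * h z) U := by
      exact (((differentiableOn_id.sub_const z₀).pow 2).mul hh)
    exact this.congr (fun z _ => hg z)
  have hgc : ContinuousOn g U := hgdiff.continuousOn
  -- define V
  set V : Set ℂ := {z ∈ U | h z ≠ 0 ∧ ‖g z‖ < 1} with hV
  have hVopen : IsOpen V := by
    have h1 : IsOpen {z ∈ U | h z ≠ 0} :=
      hhc.isOpen_inter_preimage hU isOpen_compl_singleton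
    have h2 : IsOpen {z ∈ U | ‖g z‖ < 1} := by
      have : ContinuousOn (fun z => ‖g z‖) U :=
        continuous_norm.comp_continuousOn hgc
      exact this.isOpen_inter_preimage hU (isOpen_Iio)
    have : V = {z ∈ U | h z ≠ 0} ∩ {z ∈ U | ‖g z‖ < 1} := by
      ext z; simp only [hV, Set.mem_setOf_eq, Set.mem_inter_iff]; tauto
    rw [this]; exact h1.inter h2
  have hz₀V : z₀ ∈ V := by
    refine ⟨hz₀U, hh0, ?_⟩
    simp [hg z₀]
  have hVU : V ⊆ U := fun z hz => hz.1
  -- deriv h analytic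
  have hhA : AnalyticOnNhd ℂ h U := hh.analyticOnNhd hU
  have hdh : DifferentiableOn ℂ (deriv h) U := (hhA.deriv).differentiableOn
  -- F
  set q : ℂ → ℂ := fun z => 2 * h z + (z - z₀) * deriv h z with hq
  set F : ℂ → ℂ := fun z =>
    (starRingEnd ℂ) (g z) * (z * q z) ^ 2 / ((g z * (starRingEnd ℂ) (g z) - 1) * h z)
    with hF
  refine ⟨V, hVopen, hz₀V, hVU, F, ?_, ?_⟩
  · -- smoothness
    have hconj : ContDiff ℝ (⊤ : ℕ∞) (fun w : ℂ => (starRingEnd ℂ) w) :=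
      Complex.conjCLE.contDiff
    have hgS : ContDiffOn ℝ (⊤ : ℕ∞) g V := ((hgdiff.contDiffOn hU).restrict_scalars ℝ).mono hVU
    have hhS : ContDiffOn ℝ (⊤ : ℕ∞) h V := ((hh.contDiffOn hU).restrict_scalars ℝ).mono hVU
    have hdhS : ContDiffOn ℝ (⊤ : ℕ∞) (deriv h) V := ((hdh.contDiffOn hU).restrict_scalars ℝ).mono hVU
    have hcg : ContDiffOn ℝ (⊤ : ℕ∞) (fun z => (starRingEnd ℂ) (g z)) V := hconj.comp_contDiffOn hgS
    have hqS : ContDiffOn ℝ (⊤ : ℕ∞) q V := by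
      exact (contDiffOn_const.mul hhS).add
        ((contDiffOn_id.sub contDiffOn_const).mul hdhS)
    have hnum : ContDiffOn ℝ (⊤ : ℕ∞) (fun z => (starRingEnd ℂ) (g z) * (z * q z) ^ 2) V :=
      hcg.mul ((contDiffOn_id.mul hqS).pow 2)
    have hden : ContDiffOn ℝ (⊤ : ℕ∞) (fun z => (g z * (starRingEnd ℂ) (g z) - 1) * h z) V :=
      ((hgS.mul hcg).sub contDiffOn_const).mul hhS
    have h0 : ∀ z ∈ V, (g z * (starRingEnd ℂ) (g z) - 1) * h z ≠ 0 := by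
      intro z hz
      obtain ⟨hzU, hhz, habs⟩ := hz
      have h1 : g z * (starRingEnd ℂ) (g z) - 1 ≠ 0 := by
        rw [Complex.mul_conj]
        have hlt : Complex.normSq (g z) < 1 := by
          rw [Complex.normSq_eq_norm_sq]; nlinarith [norm_nonneg (g z)]
        intro hc
        have : ((Complex.normSq (g z) : ℂ)) = 1 := by linear_combination hc
        have : Complex.normSq (g z) = 1 := by exact_mod_cast this
        linarith
      exact mul_ne_zero h1 hhz
    exact (hnum.mul (hden.inv h0)).congr (fun z _ => div_eq_mul_inv _ _)
  · -- equality
    intro z hz hzne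
    obtain ⟨hzU, hhz, habs⟩ := hz
    have hsub : z - z₀ ≠ 0 := sub_ne_zero.mpr hzne
    have hgz : g z ≠ 0 := hgne z hzU hzne
    -- deriv g
    have hdg : deriv g z = (z - z₀) * q z := by
      have hdiff : DifferentiableAt ℂ h z := hh.differentiableAt (hU.mem_nhds hzU)
      have : deriv g z = deriv (fun w => (w - z₀) ^ 2 * h w) z := by
        congr 1; ext w; exact hg w
      rw [this]
      rw [deriv_fun_mul (by fun_prop) hdiff]
      have : deriv (fun w => (w - z₀) ^ 2) z = 2 * (z - z₀) := by
        have := ((hasDerivAt_id z).sub_const z₀).pow 2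
        simpa using this.deriv
      rw [this, hq]; ring
    have ha : (↑(‖g z‖ ^ 2) : ℂ) = g z * (starRingEnd ℂ) (g z) := by
      rw [Complex.sq_norm, Complex.mul_conj]
    have hane : (1 : ℝ) - ‖g z‖ ^ 2 ≠ 0 := by
      have : ‖g z‖ ^ 2 < 1 := by
        nlinarith [norm_nonneg (g z)]
      linarith
    have hcne : (1 : ℂ) - g z * (starRingEnd ℂ) (g z) ≠ 0 := by
      rw [← ha]
      intro hc
      have : (↑(‖g z‖ ^ 2) : ℂ) = 1 := by linear_combination -hc
      have := Complex.ofReal_injective (by exact_mod_cast this)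
      exact hane (by linarith)
    have hcne' : 1 - (z - z₀) ^ 2 * h z * (starRingEnd ℂ) (g z) ≠ 0 := by
      rw [← hg z]; exact hcne
    have hcast : (((1 - 1 / (1 - ‖g z‖ ^ 2) : ℝ)) : ℂ)
        = 1 - 1 / (1 - g z * (starRingEnd ℂ) (g z)) := by
      push_cast
      rw [← Complex.ofReal_pow, ha]
    rw [hΨ z, hcast, hdg, hF]
    simp only
    rw [hg z] at hcne' ⊢
    generalize (starRingEnd ℂ) ((z - z₀) ^ 2 * h z) = c at hcne' ⊢
    have hQ : ∀ (s hh qq : ℂ), s ≠ 0 → hh ≠ 0 → 1 - s ^ 2 * hh * c ≠ 0 →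
        c * (z * qq) ^ 2 / ((s ^ 2 * hh * c - 1) * hh)
          = (1 - 1 / (1 - s ^ 2 * hh * c)) * (z * (s * qq) / (s ^ 2 * hh)) ^ 2 := by
      intro s hh qq hs hhh hd
      have hd' : s ^ 2 * hh * c - 1 ≠ 0 := fun hc0 => hd (by linear_combination -hc0)
      field_simp
      rw [show c * s ^ 2 * hh - 1 = -(1 - c * s ^ 2 * hh) by ring, div_neg]
      have hd4 : (1 - c * s ^ 2 * hh) ≠ 0 := fun h0 => hd (by linear_combination h0)
      have hy : (1 - c * s ^ 2 * hh) * (1 - c * s ^ 2 * hh)⁻¹ = 1 := mul_inv_cancel₀ hd4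
      linear_combination (z ^ 2 * qq ^ 2) * hy
    exact hQ (z - z₀) (h z) (q z) hsub hhz hcne'
end

section
/- Let z₀ ∈ ℂ with z₀ ≠ 0, let U be an open neighborhood of z₀, and let g : U → ℂ be holomorphic with g(z) = (z − z₀)² h(z), where h is holomorphic on U, h(z₀) ≠ 0, g has no zeros in U ∖ {z₀}, and h(z₀) + z₀ h′(z₀) = 0. Then the Lorentzian Shiffman expression u(z) = Im[ ½ · ((|g(z)|² + 1)/(|g(z)|² − 1)) · (z g′(z)/g(z))² − z · d/dz( z g′(z)/g(z) ) ], defined on a punctured neighborhood of z₀, extends continuously to z₀: there is a continuous function on a neighborhood of z₀ agreeing with u away from z₀. -/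
open Complex Set

private lemma shiffman_key (z w H Hd Hb cb Nd Dd : ℂ) (hw : w ≠ 0) (hH : H ≠ 0)
    (hP : w ^ 2 * H * (cb ^ 2 * Hb) - 1 ≠ 0) :
    cb ^ 2 * (z * (2 * H + w * Hd)) ^ 2 * Hb / H / (w ^ 2 * H * (cb ^ 2 * Hb) - 1)
      + (-(1 / 2) * (z * (2 * H + w * Hd)) ^ 2 - z * Nd * (w * H)
          + z * (z * (2 * H + w * Hd)) * Dd) / w / w / H ^ 2
    = 1 / 2 * ((w ^ 2 * H * (cb ^ 2 * Hb) + 1) / (w ^ 2 * H * (cb ^ 2 * Hb) - 1))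
        * (z * (2 * H + w * Hd) / (w * H)) ^ 2
      - z * ((Nd * (w * H) - z * (2 * H + w * Hd) * Dd) / (w * H) ^ 2) := by
  set P := w ^ 2 * H * (cb ^ 2 * Hb) - 1 with hPdef
  have hrel : w ^ 2 * H * (cb ^ 2 * Hb) = P + 1 := by rw [hPdef]; ring
  rw [hrel]
  field_simp
  rw [hPdef]
  ring_nf

theorem HasDerivAt.lmul {c d : ℂ → ℂ} {c' d' x : ℂ} (hc : HasDerivAt c c' x)
    (hd : HasDerivAt d d' x) : HasDerivAt (fun y => c y * d y) (c' * d x + c x * d') x :=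
  hc.mul hd

theorem HasDerivAt.ladd {c d : ℂ → ℂ} {c' d' x : ℂ} (hc : HasDerivAt c c' x)
    (hd : HasDerivAt d d' x) : HasDerivAt (fun y => c y + d y) (c' + d') x :=
  hc.add hd

theorem HasDerivAt.lsub {c d : ℂ → ℂ} {c' d' x : ℂ} (hc : HasDerivAt c c' x)
    (hd : HasDerivAt d d' x) : HasDerivAt (fun y => c y - d y) (c' - d') x :=
  hc.sub hd

theorem HasDerivAt.lpow {c : ℂ → ℂ} {c' x : ℂ} (hc : HasDerivAt c c' x) (n : ℕ) :
    HasDerivAt (fun y => c y ^ n) (n * c x ^ (n - 1) * c') x :=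
  hc.pow n

set_option maxHeartbeats 1000000

/-- **Continuous extension of the Lorentzian Shiffman function across a
boundary point where the Gauss map has a zero of order two (Lemma 3.3).**
Let `z₀ ≠ 0`, `h` holomorphic near `z₀` with `h z₀ ≠ 0`,
`g z = (z - z₀)² h z` nonvanishing away from `z₀`, and assume the period
condition `h z₀ + z₀ h' z₀ = 0`. Then the Lorentzian Shiffman expression
`u z = Im[½ ((|g|²+1)/(|g|²-1)) (z g'/g)² - z (z g'/g)']` extends
continuously to `z₀`. -/
theorem lorentzian_shiffman_function_continuous_extension
    (z₀ : ℂ) (hz₀ : z₀ ≠ 0)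
    (U : Set ℂ) (hU : IsOpen U) (hz₀U : z₀ ∈ U)
    (h : ℂ → ℂ) (hh : DifferentiableOn ℂ h U) (hh0 : h z₀ ≠ 0)
    (g : ℂ → ℂ) (hg : ∀ z, g z = (z - z₀) ^ 2 * h z)
    (hgne : ∀ z ∈ U, z ≠ z₀ → g z ≠ 0)
    (hcoef : h z₀ + z₀ * deriv h z₀ = 0)
    (u : ℂ → ℝ)
    (hu : ∀ z, u z =
      (((1 / 2 : ℂ)
          * ((((‖g z‖) ^ 2 + 1) / ((‖g z‖) ^ 2 - 1) : ℝ) : ℂ)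
          * (z * deriv g z / g z) ^ 2
        - z * deriv (fun w => w * deriv g w / g w) z)).im) :
    ∃ V : Set ℂ, IsOpen V ∧ z₀ ∈ V ∧ V ⊆ U ∧
      ∃ F : ℂ → ℝ, ContinuousOn F V ∧ ∀ z ∈ V, z ≠ z₀ → F z = u z := by
  -- analyticity of `h` and its derivatives
  have Hh : AnalyticOnNhd ℂ h U := hh.analyticOnNhd hU
  have Hh1 : AnalyticOnNhd ℂ (deriv h) U := Hh.deriv
  -- auxiliary holomorphic functions
  set N : ℂ → ℂ := fun z => z * (2 * h z + (z - z₀) * deriv h z) with hNdef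
  set D : ℂ → ℂ := fun z => (z - z₀) * h z with hDdef
  have HN : AnalyticOnNhd ℂ N U := by
    apply AnalyticOnNhd.mul (analyticOnNhd_id)
    exact ((analyticOnNhd_const.mul Hh).add
      ((analyticOnNhd_id.sub analyticOnNhd_const).mul Hh1))
  have HD : AnalyticOnNhd ℂ D U :=
    (analyticOnNhd_id.sub analyticOnNhd_const).mul Hh
  set M : ℂ → ℂ := fun z =>
    -(1/2) * N z ^ 2 - z * deriv N z * D z + z * N z * deriv D z with hMdef
  have HM : AnalyticOnNhd ℂ M U := by
    apply AnalyticOnNhd.add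
    · exact (analyticOnNhd_const.mul (HN.pow 2)).sub
        ((analyticOnNhd_id.mul HN.deriv).mul HD)
    · exact (analyticOnNhd_id.mul HN).mul HD.deriv
  -- derivative of D on U
  have hDd : ∀ z ∈ U, HasDerivAt D (h z + (z - z₀) * deriv h z) z := by
    intro z hz
    have := ((hasDerivAt_id z).sub_const z₀).lmul ((Hh z hz).differentiableAt.hasDerivAt)
    simpa using this
  have hDderiv : ∀ z ∈ U, deriv D z = h z + (z - z₀) * deriv h z :=
    fun z hz => (hDd z hz).deriv
  -- derivative of N on U
  have hNd : ∀ z ∈ U, HasDerivAt N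
      ((2 * h z + (z - z₀) * deriv h z)
        + z * (2 * deriv h z + (deriv h z + (z - z₀) * deriv (deriv h) z))) z := by
    intro z hz
    have hin : HasDerivAt (fun w => 2 * h w + (w - z₀) * deriv h w)
        (2 * deriv h z + (deriv h z + (z - z₀) * deriv (deriv h) z)) z := by
      have h1 := ((Hh z hz).differentiableAt.hasDerivAt).const_mul (2:ℂ)
      have h2 := ((hasDerivAt_id z).sub_const z₀).lmul
        ((Hh1 z hz).differentiableAt.hasDerivAt)
      simpa using h1.ladd h2
    simpa using (hasDerivAt_id z).lmul hin
  have hNderiv : ∀ z ∈ U, deriv N z =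
      (2 * h z + (z - z₀) * deriv h z)
        + z * (2 * deriv h z + (deriv h z + (z - z₀) * deriv (deriv h) z)) :=
    fun z hz => (hNd z hz).deriv
  -- second derivative of D at z₀
  have hDdd : deriv (deriv D) z₀ = 2 * deriv h z₀ := by
    have hev : deriv D =ᶠ[nhds z₀] fun z => h z + (z - z₀) * deriv h z :=
      Filter.eventuallyEq_of_mem (hU.mem_nhds hz₀U) hDderiv
    rw [hev.deriv_eq]
    have h2 : HasDerivAt (fun z => (z - z₀) * deriv h z)
        (deriv h z₀ + (z₀ - z₀) * deriv (deriv h) z₀) z₀ := by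
      have := ((hasDerivAt_id z₀).sub_const z₀).lmul
        ((Hh1 z₀ hz₀U).differentiableAt.hasDerivAt)
      simpa using this
    have := ((Hh z₀ hz₀U).differentiableAt.hasDerivAt).ladd h2
    rw [this.deriv]; ring
  -- M has a double zero at z₀
  have hM0 : M z₀ = 0 := by
    have e1 : D z₀ = 0 := by simp [hDdef]
    have e2 : deriv D z₀ = h z₀ + (z₀ - z₀) * deriv h z₀ := hDderiv z₀ hz₀U
    simp only [hMdef, hNdef, e1, e2]
    ring
  have hdN2 : HasDerivAt (deriv N) (deriv (deriv N) z₀) z₀ :=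
    ((HN.deriv) z₀ hz₀U).differentiableAt.hasDerivAt
  have hdD2 : HasDerivAt (deriv D) (deriv (deriv D) z₀) z₀ :=
    ((HD.deriv) z₀ hz₀U).differentiableAt.hasDerivAt
  have hM1 : deriv M z₀ = 0 := by
    have hNz := hNd z₀ hz₀U
    have hDz := hDd z₀ hz₀U
    have t1 := ((hNz.lpow 2).const_mul (-(1/2:ℂ)))
    have t2 := (((hasDerivAt_id z₀).lmul hdN2).lmul hDz)
    have t3 := (((hasDerivAt_id z₀).lmul hNz).lmul hdD2)
    have tM := (t1.lsub t2).ladd t3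
    simp only [id_eq] at tM
    rw [tM.deriv]
    have e1 : D z₀ = 0 := by simp [hDdef]
    have e2 : N z₀ = z₀ * (2 * h z₀ + (z₀ - z₀) * deriv h z₀) := by simp [hNdef]
    have e3 : deriv D z₀ = h z₀ + (z₀ - z₀) * deriv h z₀ := hDderiv z₀ hz₀U
    have e4 := hNderiv z₀ hz₀U
    rw [e1, e2, e3, e4, hDdd]
    linear_combination (-2*z₀*h z₀) * hcoef
  -- the open neighbourhood V
  have hgC : ContinuousOn g U := by
    have hgfun : g = fun z => (z - z₀) ^ 2 * h z := funext hg
    rw [hgfun]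
    exact (((continuous_id.sub continuous_const).pow 2).continuousOn).mul hh.continuousOn
  have hV1 : IsOpen (U ∩ h ⁻¹' {(0:ℂ)}ᶜ) :=
    hh.continuousOn.isOpen_inter_preimage hU isOpen_compl_singleton
  have habsC : ContinuousOn (fun z => ‖g z‖) (U ∩ h ⁻¹' {(0:ℂ)}ᶜ) :=
    continuous_norm.comp_continuousOn (hgC.mono inter_subset_left)
  set V : Set ℂ := (U ∩ h ⁻¹' {(0:ℂ)}ᶜ) ∩ (fun z => ‖g z‖) ⁻¹' Iio 1 with hVdef
  have hVo : IsOpen V := habsC.isOpen_inter_preimage hV1 isOpen_Iio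
  have hVU : V ⊆ U := fun z hz => hz.1.1
  have hz₀V : z₀ ∈ V := by
    refine ⟨⟨hz₀U, by simp [hh0]⟩, ?_⟩
    simp [hVdef, hg z₀]
  -- nonvanishing facts on V
  have hhV : ∀ z ∈ V, h z ≠ 0 := fun z hz => hz.1.2
  have habslt : ∀ z ∈ V, ‖g z‖ < 1 := fun z hz => hz.2
  have hdenR : ∀ z ∈ V, (‖g z‖ ^ 2 - 1 : ℝ) ≠ 0 := by
    intro z hz
    have h1 := habslt z hz
    have h2 := norm_nonneg (g z)
    nlinarith
  -- the extension F
  refine ⟨V, hVo, hz₀V, hVU, fun z =>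
    ((starRingEnd ℂ) (z - z₀) ^ 2 * N z ^ 2 * (starRingEnd ℂ) (h z) / h z
        / ((‖g z‖ ^ 2 - 1 : ℝ) : ℂ)
      + dslope (dslope M z₀) z₀ z / h z ^ 2).im, ?_, ?_⟩
  · -- continuity of F on V
    apply Complex.continuous_im.comp_continuousOn
    apply ContinuousOn.add
    · apply ContinuousOn.div
      · apply ContinuousOn.div
        · exact ((Complex.continuous_conj.comp
              (continuous_id.sub continuous_const)).pow 2).continuousOn.mul
            ((HN.continuousOn.mono hVU).pow 2) |>.mul
            (Complex.continuous_conj.comp_continuousOn (hh.continuousOn.mono hVU))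
        · exact hh.continuousOn.mono hVU
        · exact hhV
      · exact Complex.continuous_ofReal.comp_continuousOn
          (((habsC.mono inter_subset_left).pow 2).sub continuousOn_const)
      · intro z hz
        exact Complex.ofReal_ne_zero.2 (hdenR z hz)
    · apply ContinuousOn.div
      · have hds1C : ContinuousOn (dslope M z₀) V :=
          (continuousOn_dslope (hVo.mem_nhds hz₀V)).2
            ⟨HM.continuousOn.mono hVU, (HM z₀ hz₀U).differentiableAt⟩
        have hds1d : DifferentiableAt ℂ (dslope M z₀) z₀ := by
          obtain ⟨p, hp⟩ := HM z₀ hz₀U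
          exact AnalyticAt.differentiableAt ⟨p.fslope, hp.has_fpower_series_dslope_fslope⟩
        exact (continuousOn_dslope (hVo.mem_nhds hz₀V)).2 ⟨hds1C, hds1d⟩
      · exact (hh.continuousOn.mono hVU).pow 2
      · exact fun z hz => pow_ne_zero 2 (hhV z hz)
  · -- F agrees with u away from z₀
    intro z hzV hne
    have hzU : z ∈ U := hVU hzV
    have hhz : h z ≠ 0 := hhV z hzV
    have hw : z - z₀ ≠ 0 := sub_ne_zero.2 hne
    have hDz : D z ≠ 0 := mul_ne_zero hw hhz
    -- derivative of g on U
    have hgd : ∀ w ∈ U, deriv g w = 2 * (w - z₀) * h w + (w - z₀) ^ 2 * deriv h w := by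
      intro w hw'
      have hgfun : g = fun x => (x - z₀) ^ 2 * h x := funext hg
      have hp : HasDerivAt (fun x : ℂ => (x - z₀) ^ 2) (2 * (w - z₀)) w := by
        simpa using ((hasDerivAt_id w).sub_const z₀).lpow 2
      have hmul := hp.lmul ((Hh w hw').differentiableAt.hasDerivAt)
      rw [hgfun, hmul.deriv]
    -- the logarithmic derivative equals N/D near z
    have hWo : IsOpen (V \ {z₀}) := hVo.sdiff isClosed_singleton
    have hzW : z ∈ V \ {z₀} := ⟨hzV, hne⟩
    have hfeq : ∀ w ∈ V \ {z₀}, w * deriv g w / g w = N w / D w := by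
      intro w hw'
      have hwU : w ∈ U := hVU hw'.1
      have hwne : w - z₀ ≠ 0 := sub_ne_zero.2 hw'.2
      have hhw : h w ≠ 0 := hhV w hw'.1
      rw [hgd w hwU, hg w]
      simp only [hNdef, hDdef]
      field_simp
    have hderivf : deriv (fun w => w * deriv g w / g w) z
        = (deriv N z * D z - N z * deriv D z) / D z ^ 2 := by
      have hev : (fun w => w * deriv g w / g w) =ᶠ[nhds z] fun w => N w / D w :=
        Filter.eventuallyEq_of_mem (hWo.mem_nhds hzW) hfeq
      rw [hev.deriv_eq]
      exact deriv_div ((HN z hzU).differentiableAt) ((HD z hzU).differentiableAt) hDz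
    -- value of the double dslope
    have hds : dslope (dslope M z₀) z₀ z = M z / (z - z₀) / (z - z₀) := by
      have h1 : dslope M z₀ z = M z / (z - z₀) := by
        rw [dslope_of_ne _ hne, slope_def_field, hM0, sub_zero]
      have h0 : dslope M z₀ z₀ = 0 := by rw [dslope_same]; exact hM1
      rw [dslope_of_ne _ hne, slope_def_field, h1, h0, sub_zero]
    -- conjugation facts
    have hconj : (starRingEnd ℂ) (g z)
        = (starRingEnd ℂ) (z - z₀) ^ 2 * (starRingEnd ℂ) (h z) := by
      rw [hg z, map_mul, map_pow]
    have hA : ((‖g z‖ : ℝ) : ℂ) ^ 2 = g z * (starRingEnd ℂ) (g z) := by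
      rw [← Complex.ofReal_pow, Complex.sq_norm]
      exact (Complex.mul_conj _).symm
    have hPne : (g z * (starRingEnd ℂ) (g z) - 1 : ℂ) ≠ 0 := by
      rw [← hA, ← Complex.ofReal_pow]
      intro hc
      apply hdenR z hzV
      have := sub_eq_zero.1 hc
      exact_mod_cast sub_eq_zero.2 this
    -- final computation
    rw [hu z]
    refine congrArg Complex.im ?_
    rw [hderivf, hds, hfeq z hzW]
    have hPne' : ((z - z₀) ^ 2 * h z * ((starRingEnd ℂ) (z - z₀) ^ 2 * (starRingEnd ℂ) (h z))
        - 1 : ℂ) ≠ 0 := by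
      rw [← hconj, ← hg z]; exact hPne
    push_cast
    rw [hA, hconj, hg z]
    simp only [hNdef, hDdef, hMdef]
    exact shiffman_key z (z - z₀) (h z) (deriv h z) ((starRingEnd ℂ) (h z))
      ((starRingEnd ℂ) (z - z₀)) (deriv (fun z => z * (2 * h z + (z - z₀) * deriv h z)) z)
      (deriv (fun z => (z - z₀) * h z) z) hw hhz hPne'
end

section
/- Let U ⊆ ℂ be an open set invariant under the reflection z ↦ −conj(z), and let w : U → ℂ be holomorphic with w(−conj(z)) = −conj(w(z)) for all z ∈ U. Let z₀ ∈ U with Re(z₀) = 0 and w′(z₀) ≠ 0. Then the function V(z) = Im( (w′(z))² ) / ( |e^{w(z)}|² − 1 ), defined for z near z₀ with Re(z) ≠ 0, extends to a C^∞ function on an open neighborhood of z₀. -/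
open Complex Filter Metric
open scoped NNReal ENNReal
set_option maxHeartbeats 1000000

lemma prod_ite_pow_aux (n j : ℕ) (hj : j ≤ n) (u v : ℂ) :
    (∏ i : Fin n, if (i : ℕ) < j then u else v) = u ^ j * v ^ (n - j) := by
  rw [Fin.prod_univ_eq_prod_range (fun k => if k < j then u else v) n,
    ← Finset.prod_range_mul_prod_Ico _ hj]
  congr 1
  · rw [Finset.prod_congr rfl (fun i hi => if_pos (Finset.mem_range.mp hi)),
      Finset.prod_const, Finset.card_range]
  · rw [Finset.prod_congr rfl (fun i hi => if_neg (by
      have := (Finset.mem_Ico.mp hi).1; omega)), Finset.prod_const, Nat.card_Ico]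

/-- Factorization `f z - f (-conj z) = 2 (Re z) B z` with `B` real-analytic near `z₀`. -/
lemma reflect_factor (f : ℂ → ℂ) (z₀ : ℂ) (hz₀ : z₀.re = 0) (hf : AnalyticAt ℂ f z₀) :
    ∃ B : ℂ → ℂ, (∀ᶠ z in nhds z₀, AnalyticAt ℝ B z) ∧ B z₀ = deriv f z₀ ∧
      ∀ᶠ z in nhds z₀, f z - f (-(starRingEnd ℂ) z) = (((2 * z.re : ℝ)) : ℂ) * B z := by
  obtain ⟨p, hpat⟩ := hf
  obtain ⟨rb, hpb⟩ := hpat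
  set c : ℕ → ℂ := p.coeff with hc
  set m : ℂ →L[ℝ] ℂ := -((Complex.conjCLE : ℂ ≃L[ℝ] ℂ) : ℂ →L[ℝ] ℂ) with hm
  have hm_apply : ∀ x : ℂ, m x = -(starRingEnd ℂ) x := fun x => by
    simp [hm]
  have hm_norm : ‖m‖ ≤ 1 := by
    refine ContinuousLinearMap.opNorm_le_bound m zero_le_one (fun x => ?_)
    rw [hm_apply]; simp
  set q : FormalMultilinearSeries ℝ ℂ ℂ := fun n =>
    ∑ j ∈ Finset.range (n + 1), c (n + 1) •
      (ContinuousMultilinearMap.mkPiAlgebraFin ℝ n ℂ).compContinuousLinearMap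
        (fun i => if (i : ℕ) < j then ContinuousLinearMap.id ℝ ℂ else m) with hqdef
  have hq_apply : ∀ (n : ℕ) (y : ℂ), (q n fun _ => y) =
      ∑ j ∈ Finset.range (n + 1), c (n + 1) * (y ^ j * (-(starRingEnd ℂ) y) ^ (n - j)) := by
    intro n y
    rw [hqdef]
    rw [ContinuousMultilinearMap.sum_apply]
    refine Finset.sum_congr rfl fun j hj => ?_
    have hj' : j ≤ n := Nat.lt_succ_iff.mp (Finset.mem_range.mp hj)
    rw [ContinuousMultilinearMap.smul_apply,
      ContinuousMultilinearMap.compContinuousLinearMap_apply,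
      ContinuousMultilinearMap.mkPiAlgebraFin_apply, smul_eq_mul]
    congr 1
    rw [List.prod_ofFn]
    have : ∀ i : Fin n, ((if (i : ℕ) < j then ContinuousLinearMap.id ℝ ℂ else m) y)
        = if (i : ℕ) < j then y else -(starRingEnd ℂ) y := by
      intro i; split_ifs <;> simp [hm_apply]
    rw [Finset.prod_congr rfl (fun i _ => this i)]
    exact prod_ite_pow_aux n j hj' y _
  have hq_norm : ∀ n, ‖q n‖ ≤ (n + 1) * ‖p (n + 1)‖ := by
    intro n
    have hcn : ‖c (n + 1)‖ ≤ ‖p (n + 1)‖ := by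
      have hcoeff : c (n + 1) = p (n + 1) (fun _ => (1 : ℂ)) := rfl
      rw [hcoeff]
      have h := (p (n + 1)).le_opNorm (fun _ => (1 : ℂ))
      calc ‖p (n + 1) (fun _ => (1 : ℂ))‖ ≤ ‖p (n + 1)‖ * ∏ _i : Fin (n + 1), ‖(1 : ℂ)‖ := h
        _ = ‖p (n + 1)‖ := by simp
    calc ‖q n‖ ≤ ∑ j ∈ Finset.range (n + 1), ‖c (n + 1) •
          (ContinuousMultilinearMap.mkPiAlgebraFin ℝ n ℂ).compContinuousLinearMap
            (fun i => if (i : ℕ) < j then ContinuousLinearMap.id ℝ ℂ else m)‖ := by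
          rw [hqdef]; exact norm_sum_le _ _
      _ ≤ ∑ j ∈ Finset.range (n + 1), ‖p (n + 1)‖ := by
          refine Finset.sum_le_sum fun j _ => ?_
          refine le_trans (norm_smul_le (c (n + 1)) ((ContinuousMultilinearMap.mkPiAlgebraFin ℝ n ℂ).compContinuousLinearMap (fun i => if (i : ℕ) < j then ContinuousLinearMap.id ℝ ℂ else m))) ?_
          have h1 : ‖(ContinuousMultilinearMap.mkPiAlgebraFin ℝ n ℂ).compContinuousLinearMap
              (fun i => if (i : ℕ) < j then ContinuousLinearMap.id ℝ ℂ else m)‖ ≤ 1 := by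
            refine le_trans (ContinuousMultilinearMap.norm_compContinuousLinearMap_le _ _) ?_
            have h2 : (∏ i : Fin n, ‖if (i : ℕ) < j then ContinuousLinearMap.id ℝ ℂ else m‖) ≤ 1 :=
              Finset.prod_le_one (fun i _ => norm_nonneg _)
                (fun i _ => by split_ifs with h; exacts [ContinuousLinearMap.norm_id_le, hm_norm])
            calc _ ≤ 1 * ∏ i : Fin n, ‖if (i : ℕ) < j then ContinuousLinearMap.id ℝ ℂ else m‖ :=
                  mul_le_mul_of_nonneg_right (le_trans ContinuousMultilinearMap.norm_mkPiAlgebraFin_le (by simp))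
                    (Finset.prod_nonneg fun i _ => norm_nonneg _)
              _ ≤ 1 := by rw [one_mul]; exact h2
          calc ‖c (n + 1)‖ * _ ≤ ‖c (n + 1)‖ * 1 :=
                mul_le_mul_of_nonneg_left h1 (norm_nonneg _)
            _ ≤ ‖p (n + 1)‖ := by rw [mul_one]; exact hcn
      _ = (n + 1) * ‖p (n + 1)‖ := by
          rw [Finset.sum_const, Finset.card_range]; push_cast; ring
  -- radius of q is positive
  obtain ⟨r, hr0r, hrlt⟩ : ∃ r : ℝ≥0, (0 : ℝ≥0∞) < r ∧ (r : ℝ≥0∞) < p.radius :=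
    ENNReal.lt_iff_exists_nnreal_btwn.mp (lt_of_lt_of_le hpb.r_pos hpb.r_le)
  have hr0 : 0 < r := by exact_mod_cast hr0r
  have hr0' : (0 : ℝ) < (r : ℝ) := hr0
  have hsum : Summable fun n => ‖p n‖ * (r : ℝ) ^ n := p.summable_norm_mul_pow hrlt
  set r2 : ℝ≥0 := r / 2 with hr2def
  have hr2 : 0 < r2 := by positivity
  have hr2' : (r2 : ℝ) = (r : ℝ) / 2 := by rw [hr2def]; push_cast; ring
  have hsum2 : Summable fun n => ‖q n‖ * (r2 : ℝ) ^ n := by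
    have hbase : Summable fun n => ‖p (n + 1)‖ * (r : ℝ) ^ (n + 1) :=
      (summable_nat_add_iff (f := fun n => ‖p n‖ * (r : ℝ) ^ n) 1).mpr hsum
    have hbase2 : Summable fun n => (1 / (r : ℝ)) * (‖p (n + 1)‖ * (r : ℝ) ^ (n + 1)) :=
      hbase.mul_left _
    refine Summable.of_nonneg_of_le (fun n => by positivity) (fun n => ?_) hbase2
    have h1 : ‖q n‖ * (r2 : ℝ) ^ n ≤ ((n : ℝ) + 1) * ‖p (n + 1)‖ * (r2 : ℝ) ^ n :=
      mul_le_mul_of_nonneg_right (by exact_mod_cast hq_norm n) (by positivity)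
    have h2 : ((n : ℝ) + 1) ≤ 2 ^ n := by
      have h2' : n + 1 ≤ 2 ^ n := Nat.lt_two_pow_self
      exact_mod_cast h2'
    calc ‖q n‖ * (r2 : ℝ) ^ n ≤ ((n : ℝ) + 1) * ‖p (n + 1)‖ * (r2 : ℝ) ^ n := h1
      _ ≤ (2 : ℝ) ^ n * ‖p (n + 1)‖ * (r2 : ℝ) ^ n := by
          exact mul_le_mul_of_nonneg_right
            (mul_le_mul_of_nonneg_right h2 (norm_nonneg _)) (by positivity)
      _ = ‖p (n + 1)‖ * ((2 * (r2 : ℝ)) ^ n) := by rw [mul_pow]; ring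
      _ = (1 / (r : ℝ)) * (‖p (n + 1)‖ * (r : ℝ) ^ (n + 1)) := by
          rw [hr2']
          field_simp
          ring
  have hqrad : (r2 : ℝ≥0∞) ≤ q.radius := q.le_radius_of_summable hsum2
  have hqradpos : (0 : ℝ≥0∞) < q.radius := lt_of_lt_of_le (by exact_mod_cast hr2) hqrad
  -- choose the neighborhood
  set ρ : ℝ≥0∞ := min rb (r2 : ℝ≥0∞) with hρdef
  have hρpos : 0 < ρ := lt_min hpb.r_pos (by exact_mod_cast hr2)
  obtain ⟨δ, hδ0', hδρ⟩ : ∃ δ : ℝ≥0, (0 : ℝ≥0∞) < δ ∧ (δ : ℝ≥0∞) < ρ :=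
    ENNReal.lt_iff_exists_nnreal_btwn.mp hρpos
  have hδ0 : 0 < (δ : ℝ) := by exact_mod_cast hδ0'
  have hz₀conj : (starRingEnd ℂ) z₀ = -z₀ := by
    apply Complex.ext <;> simp [hz₀]
  set B : ℂ → ℂ := fun z => q.sum (z - z₀) with hBdef
  have hqball : HasFPowerSeriesOnBall q.sum q 0 q.radius :=
    q.hasFPowerSeriesOnBall hqradpos
  have hmem : ∀ z ∈ Metric.ball z₀ (δ : ℝ), (↑‖z - z₀‖₊ : ℝ≥0∞) < ρ := by
    intro z hz
    have : ‖z - z₀‖₊ < δ := by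
      rw [Metric.mem_ball, dist_eq_norm] at hz
      exact_mod_cast hz
    exact lt_trans (by exact_mod_cast this) hδρ
  refine ⟨B, ?_, ?_, ?_⟩
  · -- analyticity
    refine Filter.eventually_of_mem (Metric.ball_mem_nhds z₀ hδ0) (fun z hz => ?_)
    have h1 : AnalyticAt ℝ q.sum (z - z₀) := by
      refine hqball.analyticAt_of_mem ?_
      rw [EMetric.mem_ball, edist_zero_right]
      exact lt_of_lt_of_le (lt_of_lt_of_le (hmem z hz) (min_le_right _ _)) hqrad
    have h2 : AnalyticAt ℝ (fun z : ℂ => z - z₀) z := analyticAt_id.sub analyticAt_const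
    exact AnalyticAt.comp (g := q.sum) (f := fun z : ℂ => z - z₀) (x := z) h1 h2
  · -- value at z₀
    have h0 : B z₀ = q.sum 0 := by rw [hBdef]; simp
    have h1 : q.sum 0 = q 0 (fun _ => (0 : ℂ)) := (hqball.coeff_zero _).symm
    have h2 : (q 0 fun _ => (0 : ℂ)) = c 1 := by
      rw [hq_apply]; simp
    have h3 : deriv f z₀ = p.coeff 1 := HasFPowerSeriesAt.deriv ⟨rb, hpb⟩
    rw [h0, h1, h2, h3]
  · -- the identity
    refine Filter.eventually_of_mem (Metric.ball_mem_nhds z₀ hδ0) (fun z hz => ?_)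
    set y : ℂ := z - z₀ with hydef
    set y' : ℂ := -(starRingEnd ℂ) y with hy'def
    have hyn : ‖y'‖₊ = ‖y‖₊ := by
      rw [hy'def]; simp [nnnorm_neg]
    have hyb : (↑‖y‖₊ : ℝ≥0∞) < rb :=
      lt_of_lt_of_le (hmem z hz) (min_le_left _ _)
    have hyq : (↑‖y‖₊ : ℝ≥0∞) < q.radius :=
      lt_of_lt_of_le (lt_of_lt_of_le (hmem z hz) (min_le_right _ _)) hqrad
    have hS1 : HasSum (fun n => p n fun _ => y) (f z) := by
      have := hpb.hasSum (y := y) (by rw [EMetric.mem_ball, edist_zero_right]; exact hyb)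
      simpa [hydef] using this
    have hS2 : HasSum (fun n => p n fun _ => y') (f (-(starRingEnd ℂ) z)) := by
      have := hpb.hasSum (y := y') (by
        rw [EMetric.mem_ball, edist_zero_right, enorm_eq_nnnorm, hyn]; exact hyb)
      have he : z₀ + y' = -(starRingEnd ℂ) z := by
        rw [hy'def, hydef, map_sub, hz₀conj]; ring
      rwa [he] at this
    have hS3 : HasSum (fun n => q n fun _ => y) (q.sum y) :=
      q.hasSum (by rw [EMetric.mem_ball, edist_zero_right]; exact hyq)
    have h2re : (((2 * z.re : ℝ)) : ℂ) = y - y' := by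
      rw [hy'def, hydef]
      rw [sub_neg_eq_add, Complex.add_conj]
      push_cast
      simp [hz₀]
    have key : ∀ n, (((2 * z.re : ℝ)) : ℂ) * (q n fun _ => y)
        = c (n + 1) * y ^ (n + 1) - c (n + 1) * y' ^ (n + 1) := by
      intro n
      rw [hq_apply, h2re]
      have hgs := geom_sum₂_mul y y' (n + 1)
      have hrw : ∀ j ∈ Finset.range (n + 1),
          c (n + 1) * (y ^ j * (-(starRingEnd ℂ) y) ^ (n - j))
          = c (n + 1) * (y ^ j * y' ^ (n + 1 - 1 - j)) := by
        intro j hj; rw [← hy'def]; norm_num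
      rw [Finset.sum_congr rfl hrw, ← Finset.mul_sum]
      calc (y - y') * (c (n + 1) * ∑ j ∈ Finset.range (n + 1), y ^ j * y' ^ (n + 1 - 1 - j))
          = c (n + 1) * ((∑ j ∈ Finset.range (n + 1), y ^ j * y' ^ (n + 1 - 1 - j)) * (y - y')) := by
            ring
        _ = c (n + 1) * (y ^ (n + 1) - y' ^ (n + 1)) := by rw [hgs]
        _ = _ := by ring
    have hmul : HasSum (fun n => c (n + 1) * y ^ (n + 1) - c (n + 1) * y' ^ (n + 1))
        ((((2 * z.re : ℝ)) : ℂ) * q.sum y) := by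
      have := hS3.mul_left ((((2 * z.re : ℝ)) : ℂ))
      rwa [show (fun n => (((2 * z.re : ℝ)) : ℂ) * (q n fun _ => y))
        = fun n => c (n + 1) * y ^ (n + 1) - c (n + 1) * y' ^ (n + 1) from funext key] at this
    have hsub : HasSum (fun n => c n * y ^ n - c n * y' ^ n) (f z - f (-(starRingEnd ℂ) z)) := by
      have h1 : ∀ (u : ℂ) (n : ℕ), (p n fun _ => u) = c n * u ^ n := by
        intro u n
        rw [p.apply_eq_pow_smul_coeff, smul_eq_mul, hc]; ring
      have := hS1.sub hS2
      rwa [show (fun n => (p n fun _ => y) - (p n fun _ => y'))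
        = fun n => c n * y ^ n - c n * y' ^ n from funext (fun n => by rw [h1, h1])] at this
    have hshift : HasSum (fun n => c (n + 1) * y ^ (n + 1) - c (n + 1) * y' ^ (n + 1))
        (f z - f (-(starRingEnd ℂ) z)) := by
      have := (hasSum_nat_add_iff' (f := fun n => c n * y ^ n - c n * y' ^ n) 1).mpr hsub
      simpa using this
    have := hmul.unique hshift
    rw [hBdef]
    simp only []
    rw [← hydef, ← this]

lemma deriv_reflect (U : Set ℂ) (hU : IsOpen U) (hUsymm : ∀ z ∈ U, -(starRingEnd ℂ) z ∈ U)
    (w : ℂ → ℂ) (hw : DifferentiableOn ℂ w U)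
    (hwsymm : ∀ z ∈ U, w (-(starRingEnd ℂ) z) = -(starRingEnd ℂ) (w z)) :
    ∀ z ∈ U, deriv w (-(starRingEnd ℂ) z) = (starRingEnd ℂ) (deriv w z) := by
  intro z hz
  have hζU : -(starRingEnd ℂ) z ∈ U := hUsymm z hz
  have hdζ : DifferentiableAt ℂ w (-(starRingEnd ℂ) z) :=
    hw.differentiableAt (hU.mem_nhds hζU)
  have hdz : DifferentiableAt ℂ w z := hw.differentiableAt (hU.mem_nhds hz)
  set J : ℂ →L[ℝ] ℂ := ((Complex.conjCLE : ℂ ≃L[ℝ] ℂ) : ℂ →L[ℝ] ℂ) with hJ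
  set m : ℂ →L[ℝ] ℂ := -J with hm
  have hm_eq : (fun x : ℂ => -(starRingEnd ℂ) x) = ⇑m := by
    funext x; simp [hm, hJ]
  have h1 : HasFDerivAt (fun x : ℂ => -(starRingEnd ℂ) x) m z := by
    rw [hm_eq]; exact m.hasFDerivAt
  have h2 : HasFDerivAt w ((fderiv ℂ w (-(starRingEnd ℂ) z)).restrictScalars ℝ)
      (-(starRingEnd ℂ) z) := (hdζ.hasFDerivAt).restrictScalars ℝ
  have h3 := h2.comp z h1
  have h4 := (J.hasFDerivAt).comp z h3
  have heq : (⇑J ∘ (w ∘ fun x : ℂ => -(starRingEnd ℂ) x)) =ᶠ[nhds z] fun x => -(w x) := by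
    filter_upwards [hU.mem_nhds hz] with x hx
    simp [Function.comp, hJ, hwsymm x hx]
  have h5 : HasFDerivAt (fun x => -(w x))
      (J.comp ((((fderiv ℂ w (-(starRingEnd ℂ) z)).restrictScalars ℝ)).comp m)) z :=
    h4.congr_of_eventuallyEq heq.symm
  have h6 : HasFDerivAt (fun x => -(w x)) (-((fderiv ℂ w z).restrictScalars ℝ)) z :=
    (hdz.hasFDerivAt.restrictScalars ℝ).neg
  have h7 := h5.unique h6
  have h8 := congrArg (fun (L : ℂ →L[ℝ] ℂ) => L 1) h7
  simp only [ContinuousLinearMap.comp_apply, ContinuousLinearMap.neg_apply,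
    ContinuousLinearMap.coe_restrictScalars'] at h8
  have hm1 : m 1 = -1 := by simp [hm, hJ]
  rw [hm1] at h8
  have hD : fderiv ℂ w (-(starRingEnd ℂ) z) (-1) = -(deriv w (-(starRingEnd ℂ) z)) := by
    rw [map_neg, fderiv_apply_one_eq_deriv]
  rw [hD] at h8
  have hJval : J (-(deriv w (-(starRingEnd ℂ) z)))
      = -(starRingEnd ℂ) (deriv w (-(starRingEnd ℂ) z)) := by simp [hJ]
  rw [hJval, fderiv_apply_one_eq_deriv] at h8
  have h9 : (starRingEnd ℂ) (deriv w (-(starRingEnd ℂ) z)) = deriv w z := by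
    have := neg_injective h8
    exact this
  calc deriv w (-(starRingEnd ℂ) z)
      = (starRingEnd ℂ) ((starRingEnd ℂ) (deriv w (-(starRingEnd ℂ) z))) := by
        rw [Complex.conj_conj]
    _ = (starRingEnd ℂ) (deriv w z) := by rw [h9]


/-- **Smooth extension of the Lorentzian Shiffman function across a conelike
singularity (Lemma 3.5).** If `w` is holomorphic on an open set `U` invariant
under `z ↦ -conj z` with `w (-conj z) = -conj (w z)`, `z₀ ∈ U` has
`Re z₀ = 0`, and `w' z₀ ≠ 0`, then `V(z) = Im((w' z)²)/(|e^{w z}|² - 1)`,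
defined for `z` near `z₀` with `Re z ≠ 0`, extends to a real-`C^∞` function
on a neighborhood of `z₀`. -/
theorem shiffman_smooth_extension_conelike_singularity
    (U : Set ℂ) (hU : IsOpen U)
    (hUsymm : ∀ z ∈ U, -(starRingEnd ℂ) z ∈ U)
    (w : ℂ → ℂ) (hw : DifferentiableOn ℂ w U)
    (hwsymm : ∀ z ∈ U, w (-(starRingEnd ℂ) z) = -(starRingEnd ℂ) (w z))
    (z₀ : ℂ) (hz₀U : z₀ ∈ U) (hz₀ : z₀.re = 0)
    (hw' : deriv w z₀ ≠ 0) :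
    ∃ V : Set ℂ, IsOpen V ∧ z₀ ∈ V ∧ V ⊆ U ∧
      ∃ F : ℂ → ℝ, ContDiffOn ℝ (⊤ : ℕ∞) F V ∧
        ∀ z ∈ V, z.re ≠ 0 →
          F z = ((deriv w z) ^ 2).im
            / (‖Complex.exp (w z)‖ ^ 2 - 1) := by
  have hAn : AnalyticOnNhd ℂ w U := hw.analyticOnNhd hU
  have hAn' : AnalyticOnNhd ℂ (deriv w) U := hAn.deriv
  set Wf : ℂ → ℂ := fun z => (deriv w z) ^ 2 with hWfdef
  have hAnW : AnalyticAt ℂ Wf z₀ := (hAn' z₀ hz₀U).pow 2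
  have hDsymm := deriv_reflect U hU hUsymm w hw hwsymm
  have hWsymm : ∀ z ∈ U, Wf (-(starRingEnd ℂ) z) = (starRingEnd ℂ) (Wf z) := by
    intro z hz
    rw [hWfdef]
    simp only []
    rw [hDsymm z hz, ← map_pow]
  have hz₀fix : -(starRingEnd ℂ) z₀ = z₀ := by
    apply Complex.ext <;> simp [hz₀]
  have hwz₀ : (w z₀).re = 0 := by
    have h := hwsymm z₀ hz₀U
    rw [hz₀fix] at h
    have := congrArg Complex.re h
    simp at this
    linarith
  have hd₀ : deriv w z₀ = (starRingEnd ℂ) (deriv w z₀) := by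
    have h := hDsymm z₀ hz₀U
    rwa [hz₀fix] at h
  have him : (deriv w z₀).im = 0 := by
    have := congrArg Complex.im hd₀
    simp at this
    linarith
  have hre : (deriv w z₀).re ≠ 0 := by
    intro h
    exact hw' (Complex.ext (by simpa using h) (by simpa using him))
  obtain ⟨B₁, hB₁an, hB₁val, hB₁id⟩ := reflect_factor w z₀ hz₀ (hAn z₀ hz₀U)
  obtain ⟨B₂, hB₂an, hB₂val, hB₂id⟩ := reflect_factor Wf z₀ hz₀ hAnW
  set ψ : ℂ → ℂ := dslope Complex.exp 0 with hψdef
  have hψ0 : ψ 0 = 1 := by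
    rw [hψdef, dslope_same]
    simp
  have hψmul : ∀ s : ℂ, s * ψ s = Complex.exp s - 1 := by
    intro s
    rcases eq_or_ne s 0 with h | h
    · simp [h]
    · rw [hψdef, dslope_of_ne _ h, slope_def_field]
      field_simp
      simp
  have hψan : ∀ s : ℂ, AnalyticAt ℂ ψ s := by
    intro s
    rcases eq_or_ne s 0 with h | h
    · subst h
      obtain ⟨P, hP⟩ := (analyticAt_cexp : AnalyticAt ℂ Complex.exp 0)
      exact ⟨_, hP.has_fpower_series_dslope_fslope⟩
    · have ha : AnalyticAt ℂ (fun ζ : ℂ => (Complex.exp ζ - 1) * ζ⁻¹) s :=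
        (analyticAt_cexp.sub analyticAt_const).mul (analyticAt_id.inv h)
      refine ha.congr ?_
      filter_upwards [isOpen_ne.eventually_mem h] with ζ hζ
      rw [hψdef, dslope_of_ne _ hζ, slope_def_field]
      simp only [Complex.exp_zero, sub_zero]
      ring
  have hwcont : ContinuousAt w z₀ := (hAn z₀ hz₀U).continuousAt
  have hB₁cont : ContinuousAt B₁ z₀ := hB₁an.self_of_nhds.continuousAt
  have hv0 : ((2 * (w z₀).re : ℝ) : ℂ) = 0 := by rw [hwz₀]; simp
  have e6 : ∀ᶠ z in nhds z₀, (B₁ z).re ≠ 0 := by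
    have hc : ContinuousAt (fun z => (B₁ z).re) z₀ :=
      Complex.continuous_re.continuousAt.comp hB₁cont
    have hval : (B₁ z₀).re ≠ 0 := by rw [hB₁val]; exact hre
    exact hc.preimage_mem_nhds (isOpen_ne.mem_nhds hval)
  have e7 : ∀ᶠ z in nhds z₀, (ψ (((2 * (w z).re : ℝ)) : ℂ)).re ≠ 0 := by
    have houter : Continuous (fun c : ℂ => ((2 * c.re : ℝ) : ℂ)) :=
      Complex.continuous_ofReal.comp (continuous_const.mul Complex.continuous_re)
    have h1 : ContinuousAt (fun z => ((2 * (w z).re : ℝ) : ℂ)) z₀ :=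
      houter.continuousAt.comp hwcont
    have h2 : ContinuousAt ψ (((2 * (w z₀).re : ℝ)) : ℂ) := by
      rw [hv0]; exact (hψan 0).continuousAt
    have hgc : ContinuousAt (fun z => (ψ (((2 * (w z).re : ℝ)) : ℂ)).re) z₀ :=
      Complex.continuous_re.continuousAt.comp (ContinuousAt.comp (g := ψ) (f := fun z => ((2 * (w z).re : ℝ) : ℂ)) h2 h1)
    have hgval : (ψ (((2 * (w z₀).re : ℝ)) : ℂ)).re ≠ 0 := by
      rw [hv0, hψ0]; norm_num
    exact hgc.preimage_mem_nhds (isOpen_ne.mem_nhds hgval)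
  have hall : ∀ᶠ z in nhds z₀, z ∈ U ∧ AnalyticAt ℝ B₁ z ∧ AnalyticAt ℝ B₂ z ∧
      (B₁ z).re ≠ 0 ∧ (ψ (((2 * (w z).re : ℝ)) : ℂ)).re ≠ 0 ∧
      (w z - w (-(starRingEnd ℂ) z) = (((2 * z.re : ℝ)) : ℂ) * B₁ z) ∧
      (Wf z - Wf (-(starRingEnd ℂ) z) = (((2 * z.re : ℝ)) : ℂ) * B₂ z) := by
    filter_upwards [hU.eventually_mem hz₀U, hB₁an, hB₂an, e6, e7, hB₁id, hB₂id] with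
      z h1 h2 h3 h4 h5 h6 h7
    exact ⟨h1, h2, h3, h4, h5, h6, h7⟩
  rw [_root_.eventually_nhds_iff] at hall
  obtain ⟨V, hVall, hVopen, hz₀V⟩ := hall
  refine ⟨V, hVopen, hz₀V, fun z hz => (hVall z hz).1,
    fun z => (B₂ z).im / (2 * (B₁ z).re * (ψ (((2 * (w z).re : ℝ)) : ℂ)).re), ?_, ?_⟩
  · -- smoothness
    have hFan : AnalyticOnNhd ℝ
        (fun z => (B₂ z).im / (2 * (B₁ z).re * (ψ (((2 * (w z).re : ℝ)) : ℂ)).re)) V := by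
      intro z hz
      obtain ⟨hzU, hB1z, hB2z, hb1, hb2, _, _⟩ := hVall z hz
      have hnum : AnalyticAt ℝ (fun z => (B₂ z).im) z := (Complex.imCLM.analyticAt _).comp hB2z
      have hwz : AnalyticAt ℝ w z := (hAn z hzU).restrictScalars
      have harg : AnalyticAt ℝ (fun z => ((2 * (w z).re : ℝ) : ℂ)) z :=
        (Complex.ofRealCLM.analyticAt _).comp
          (analyticAt_const.mul ((Complex.reCLM.analyticAt _).comp hwz))
      have hψz : AnalyticAt ℝ ψ (((2 * (w z).re : ℝ)) : ℂ) := (hψan _).restrictScalars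
      have hcomp : AnalyticAt ℝ (fun z => (ψ (((2 * (w z).re : ℝ)) : ℂ)).re) z :=
        (Complex.reCLM.analyticAt _).comp (AnalyticAt.comp (g := ψ) (f := fun z => ((2 * (w z).re : ℝ) : ℂ)) hψz harg)
      have hden : AnalyticAt ℝ
          (fun z => 2 * (B₁ z).re * (ψ (((2 * (w z).re : ℝ)) : ℂ)).re) z :=
        (analyticAt_const.mul ((Complex.reCLM.analyticAt _).comp hB1z)).mul hcomp
      exact hnum.div hden (mul_ne_zero (mul_ne_zero two_ne_zero hb1) hb2)
    exact hFan.contDiffOn hVopen.uniqueDiffOn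
  · -- the formula
    intro z hz hxne
    obtain ⟨hzU, _, _, hb1, hb2, idw, idW⟩ := hVall z hz
    have hwσ : w (-(starRingEnd ℂ) z) = -(starRingEnd ℂ) (w z) := hwsymm z hzU
    have hWσ : Wf (-(starRingEnd ℂ) z) = (starRingEnd ℂ) (Wf z) := hWsymm z hzU
    have idw' : w z + (starRingEnd ℂ) (w z) = (((2 * z.re : ℝ)) : ℂ) * B₁ z := by
      rw [← idw, hwσ]; ring
    have hure : (w z).re = z.re * (B₁ z).re := by
      have h := congrArg Complex.re idw'
      simp [Complex.add_re, Complex.conj_re, Complex.mul_re, Complex.ofReal_re,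
        Complex.ofReal_im] at h
      linarith
    have idW' : Wf z - (starRingEnd ℂ) (Wf z) = (((2 * z.re : ℝ)) : ℂ) * B₂ z := by
      rw [← idW, hWσ]
    have hNim : (Wf z).im = z.re * (B₂ z).im := by
      have h := congrArg Complex.im idW'
      simp [Complex.sub_im, Complex.conj_im, Complex.mul_im, Complex.ofReal_re,
        Complex.ofReal_im] at h
      linarith
    have habs2 : ‖Complex.exp (w z)‖ ^ 2 - 1 = Real.exp (2 * (w z).re) - 1 := by
      rw [Complex.norm_exp, show (2 : ℝ) * (w z).re = (w z).re + (w z).re by ring,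
        Real.exp_add, sq]
    have hden1 : Real.exp (2 * (w z).re) - 1
        = (2 * (w z).re) * (ψ (((2 * (w z).re : ℝ)) : ℂ)).re := by
      have h := congrArg Complex.re (hψmul (((2 * (w z).re : ℝ)) : ℂ))
      rw [Complex.mul_re, Complex.ofReal_re, Complex.ofReal_im, Complex.sub_re,
        Complex.one_re, Complex.exp_ofReal_re, zero_mul, sub_zero] at h
      exact h.symm
    show (B₂ z).im / (2 * (B₁ z).re * (ψ (((2 * (w z).re : ℝ)) : ℂ)).re)
        = (deriv w z ^ 2).im / (‖Complex.exp (w z)‖ ^ 2 - 1)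
    set t : ℝ := (ψ (((2 * (w z).re : ℝ)) : ℂ)).re with ht
    rw [show (deriv w z ^ 2).im = (Wf z).im from rfl, hNim, habs2, hden1]
    rw [hure]
    rw [show 2 * (z.re * (B₁ z).re) * t = z.re * (2 * (B₁ z).re * t) by ring]
    rw [mul_div_mul_left _ _ hxne]
end
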